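/- arXiv:2004.10551 — 5 statements merged into one kernel-verified Lean document; each statement's English description precedes it below -/
import Mathlib

section
/- Let ρ be a monotone graph invariant (either H ⊆ G always implies ρ(H) ≤ ρ(G), or H ⊆ G always implies ρ(H) ≥ ρ(G)), and let G be a nonempty graph with ρ(G) = k. Suppose G contains s nonempty subgraphs G₁, ..., G_s with ρ(G₁) = ... = ρ(G_s) = k, let a ≥ 0 be the number of vertices of G that occur in at least two of these subgraphs, and let q ≥ 1 be the maximum number of these subgraphs having a common vertex. Then vs_ρ(G) ≥ (1/q) Σ_{i=1}^{s} vs_ρ(G_i) ≥ s/q, and also vs_ρ(G) ≥ Σ_{i=1}^{s} vs_ρ(G_i) − a(q−1). -/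
open SimpleGraph

open scoped Classical ENNReal

/-- `H` is (isomorphic to) a subgraph of `G`. -/
def IsSubgraphOf {α β : Type} (H : SimpleGraph α) (G : SimpleGraph β) : Prop :=
  ∃ f : α ↪ β, ∀ u v : α, H.Adj u v → G.Adj (f u) (f v)

/-- The `ρ`-vertex stability number of `G`: the minimum number of vertices of `G`
whose removal results in a graph `H ⊆ G` with `ρ H ≠ ρ G` or with no edges. -/
noncomputable def vsNum {V : Type} [Fintype V] [DecidableEq V]
    (ρ : ∀ (W : Type) [Fintype W] [DecidableEq W], SimpleGraph W → ℝ≥0∞)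
    (G : SimpleGraph V) : ℕ :=
  sInf {n | ∃ S : Finset V, S.card = n ∧
    (ρ _ (G.induce (↑Sᶜ : Set V)) ≠ ρ _ G ∨ (G.induce (↑Sᶜ : Set V)).edgeSet = ∅)}

/-- `ρ` is monotone increasing: `H ⊆ G` implies `ρ H ≤ ρ G`. -/
def MonotoneIncrInv
    (ρ : ∀ (W : Type) [Fintype W] [DecidableEq W], SimpleGraph W → ℝ≥0∞) : Prop :=
  ∀ (α β : Type) [Fintype α] [DecidableEq α] [Fintype β] [DecidableEq β]
    (H : SimpleGraph α) (G : SimpleGraph β), IsSubgraphOf H G → ρ _ H ≤ ρ _ G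

/-- `ρ` is monotone decreasing: `H ⊆ G` implies `ρ H ≥ ρ G`. -/
def MonotoneDecrInv
    (ρ : ∀ (W : Type) [Fintype W] [DecidableEq W], SimpleGraph W → ℝ≥0∞) : Prop :=
  ∀ (α β : Type) [Fintype α] [DecidableEq α] [Fintype β] [DecidableEq β]
    (H : SimpleGraph α) (G : SimpleGraph β), IsSubgraphOf H G → ρ _ G ≤ ρ _ H

/-- `ρ` is maxing: for disjoint graphs, `ρ (H₁ ∪ H₂) = max (ρ H₁) (ρ H₂)`. -/
def MaxingInv
    (ρ : ∀ (W : Type) [Fintype W] [DecidableEq W], SimpleGraph W → ℝ≥0∞) : Prop :=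
  ∀ (α β : Type) [Fintype α] [DecidableEq α] [Fintype β] [DecidableEq β]
    (G : SimpleGraph α) (H : SimpleGraph β), ρ _ (G ⊕g H) = max (ρ _ G) (ρ _ H)

/-- The chromatic index: minimum number of colors in a proper edge coloring. -/
noncomputable def chromIndex {V : Type} (G : SimpleGraph V) : ℕ :=
  sInf {k | ∃ c : G.edgeSet → Fin k, ∀ e₁ e₂ : G.edgeSet, e₁ ≠ e₂ →
    (∃ v, v ∈ (e₁ : Sym2 V) ∧ v ∈ (e₂ : Sym2 V)) → c e₁ ≠ c e₂}

/-- Maximum degree. -/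
noncomputable def maxDeg {V : Type} [Fintype V] (G : SimpleGraph V) : ℕ :=
  Finset.univ.sup fun v => (G.neighborSet v).ncard

/-- Minimum degree. -/
noncomputable def minDeg {V : Type} [Fintype V] (G : SimpleGraph V) : ℕ :=
  sInf {d | ∃ v, (G.neighborSet v).ncard = d}

/-- The chromatic vertex stability number `vs_{χ'}(G)`. -/
noncomputable def vsChi {V : Type} [Fintype V] [DecidableEq V] (G : SimpleGraph V) : ℕ :=
  if G.edgeSet = ∅ then 0 else
    sInf {n | ∃ S : Finset V, S.card = n ∧
      chromIndex (G.induce (↑Sᶜ : Set V)) ≠ chromIndex G}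

/-- The `Δ`-vertex stability number `vs_Δ(G)`. -/
noncomputable def vsDelta {V : Type} [Fintype V] [DecidableEq V] (G : SimpleGraph V) : ℕ :=
  sInf {n | ∃ S : Finset V, S.card = n ∧
    (maxDeg (G.induce (↑Sᶜ : Set V)) ≠ maxDeg G ∨ (G.induce (↑Sᶜ : Set V)).edgeSet = ∅)}

/-- The `δ`-vertex stability number `vs_δ(G)`. -/
noncomputable def vsMinDeg {V : Type} [Fintype V] [DecidableEq V] (G : SimpleGraph V) : ℕ :=
  sInf {n | ∃ S : Finset V, S.card = n ∧
    (minDeg (G.induce (↑Sᶜ : Set V)) ≠ minDeg G ∨ (G.induce (↑Sᶜ : Set V)).edgeSet = ∅)}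

/-- `class G = χ'(G) - Δ(G) + 1 ∈ {1,2}`. -/
noncomputable def classInv {V : Type} [Fintype V] (G : SimpleGraph V) : ℕ :=
  chromIndex G - maxDeg G + 1

/-- The `class`-vertex stability number. -/
noncomputable def vsClass {V : Type} [Fintype V] [DecidableEq V] (G : SimpleGraph V) : ℕ :=
  sInf {n | ∃ S : Finset V, S.card = n ∧
    (classInv (G.induce (↑Sᶜ : Set V)) ≠ classInv G ∨ (G.induce (↑Sᶜ : Set V)).edgeSet = ∅)}

/-- Number of connected components. -/
noncomputable def numComponents {V : Type} (G : SimpleGraph V) : ℕ :=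
  Nat.card G.ConnectedComponent

/-- The `ω`-vertex stability number (ω = number of components). -/
noncomputable def vsOmega {V : Type} [Fintype V] [DecidableEq V] (G : SimpleGraph V) : ℕ :=
  sInf {n | ∃ S : Finset V, S.card = n ∧
    (numComponents (G.induce (↑Sᶜ : Set V)) ≠ numComponents G ∨
      (G.induce (↑Sᶜ : Set V)).edgeSet = ∅)}

/-- Vertex connectivity: minimum number of vertices whose removal yields a graph that is
not connected, or the single-vertex graph `K₁`. -/
noncomputable def kappa {V : Type} [Fintype V] [DecidableEq V] (G : SimpleGraph V) : ℕ :=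
  sInf {n | ∃ S : Finset V, S.card = n ∧
    (¬ (G.induce (↑Sᶜ : Set V)).Connected ∨ Fintype.card ↥(↑Sᶜ : Set V) = 1)}

/-- `γ(V_Δ)`: minimum size of a set `Γ` of vertices such that every vertex of maximum
degree has a neighbor in `Γ`. -/
noncomputable def gammaMaxDeg {V : Type} [Fintype V] [DecidableEq V] (G : SimpleGraph V) : ℕ :=
  sInf {n | ∃ Γ : Finset V, Γ.card = n ∧
    ∀ v : V, (G.neighborSet v).ncard = maxDeg G → ∃ u ∈ Γ, G.Adj u v}

/-- The wheel graph `W n`: cycle `C n` joined with one extra vertex. -/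
def wheelGraph (n : ℕ) : SimpleGraph (Option (Fin n)) :=
  SimpleGraph.fromRel (fun x y =>
    match x, y with
    | none, some _ => True
    | some i, some j => (j : ℕ) = ((i : ℕ) + 1) % n
    | _, _ => False)

section AuxLemmas

variable (ρ : ∀ (W : Type) [Fintype W] [DecidableEq W], SimpleGraph W → ℝ≥0∞)

lemma aux_isSubgraphOf_induce {V : Type} (G : SimpleGraph V) (t : Set V) :
    IsSubgraphOf (G.induce t) G :=
  ⟨Function.Embedding.subtype _, fun _ _ h => h⟩

lemma aux_isSubgraphOf_induce_full {V : Type} (G : SimpleGraph V) {t : Set V}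
    (ht : ∀ x, x ∈ t) : IsSubgraphOf G (G.induce t) :=
  ⟨⟨fun x => ⟨x, ht x⟩, fun a b h => by simpa using congrArg Subtype.val h⟩, fun _ _ h => h⟩

lemma aux_edgeSet_empty_of_subgraphOf {α β : Type} {H : SimpleGraph α} {G : SimpleGraph β}
    (h : IsSubgraphOf H G) (hG : G.edgeSet = ∅) : H.edgeSet = ∅ := by
  obtain ⟨f, hf⟩ := h
  rw [Set.eq_empty_iff_forall_notMem] at hG ⊢
  intro e he
  induction e using Sym2.ind with
  | _ a b =>
    rw [SimpleGraph.mem_edgeSet] at he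
    exact hG s(f a, f b) ((G.mem_edgeSet).mpr (hf _ _ he))

lemma aux_rho_eq_of_mut (hmono : MonotoneIncrInv ρ ∨ MonotoneDecrInv ρ)
    {α β : Type} [Fintype α] [DecidableEq α] [Fintype β] [DecidableEq β]
    {H : SimpleGraph α} {G : SimpleGraph β}
    (h1 : IsSubgraphOf H G) (h2 : IsSubgraphOf G H) : ρ _ H = ρ _ G := by
  rcases hmono with h | h
  · exact le_antisymm (h _ _ H G h1) (h _ _ G H h2)
  · exact le_antisymm (h _ _ G H h2) (h _ _ H G h1)

lemma aux_induce_empty_edgeSet {V : Type} (G : SimpleGraph V) {t : Set V} (ht : t = ∅) :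
    (G.induce t).edgeSet = ∅ := by
  subst ht
  rw [Set.eq_empty_iff_forall_notMem]
  intro e he
  induction e using Sym2.ind with
  | _ a b => exact (Set.notMem_empty _ a.2)

lemma aux_vsNum_set_nonempty {V : Type} [Fintype V] [DecidableEq V] (G : SimpleGraph V) :
    {n | ∃ S : Finset V, S.card = n ∧
      (ρ _ (G.induce (↑Sᶜ : Set V)) ≠ ρ _ G ∨
        (G.induce (↑Sᶜ : Set V)).edgeSet = ∅)}.Nonempty :=
  ⟨_, Finset.univ, rfl, Or.inr (aux_induce_empty_edgeSet G (by simp))⟩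

lemma aux_one_le_vsNum (hmono : MonotoneIncrInv ρ ∨ MonotoneDecrInv ρ)
    {W : Type} [Fintype W] [DecidableEq W] (H : SimpleGraph W)
    (hne : H.edgeSet ≠ ∅) : 1 ≤ vsNum ρ H := by
  rw [Nat.one_le_iff_ne_zero]
  intro h0
  rw [vsNum, Nat.sInf_eq_zero] at h0
  rcases h0 with ⟨S, hS0, hprop⟩ | h0
  · rw [Finset.card_eq_zero] at hS0
    subst hS0
    have hfull : ∀ x : W, x ∈ (↑(∅ : Finset W)ᶜ : Set W) := by simp
    rcases hprop with hprop | hprop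
    · exact hprop (aux_rho_eq_of_mut ρ hmono (aux_isSubgraphOf_induce H _)
        (aux_isSubgraphOf_induce_full H hfull))
    · exact hne (aux_edgeSet_empty_of_subgraphOf (aux_isSubgraphOf_induce_full H hfull) hprop)
  · exact absurd h0 (Set.nonempty_iff_ne_empty.mp (aux_vsNum_set_nonempty ρ H))

end AuxLemmas

/-- lower bounds for `vs_ρ(G)` from `s` nonempty subgraphs `G₁, …, G_s`
of the same `ρ`-value, where `a` is the number of vertices in at least two of the
subgraphs and `q` is the maximum number of the subgraphs sharing a common vertex. -/
theorem vs_lower_bounds_of_subgraphs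
    (ρ : ∀ (W : Type) [Fintype W] [DecidableEq W], SimpleGraph W → ℝ≥0∞)
    (hmono : MonotoneIncrInv ρ ∨ MonotoneDecrInv ρ)
    {V : Type} [Fintype V] [DecidableEq V] (G : SimpleGraph V)
    (hne : G.edgeSet ≠ ∅) (k : ℝ≥0∞) (hk : ρ _ G = k)
    (s : ℕ) (hs1 : 1 ≤ s) (Gi : Fin s → G.Subgraph)
    (hGine : ∀ i, (Gi i).edgeSet ≠ ∅)
    (hρ : ∀ i, ρ _ (Gi i).coe = k)
    (a q : ℕ) (hq1 : 1 ≤ q)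
    (ha : a = {v : V | ∃ i j : Fin s, i ≠ j ∧ v ∈ (Gi i).verts ∧ v ∈ (Gi j).verts}.ncard)
    (hq_ub : ∀ v : V, {i : Fin s | v ∈ (Gi i).verts}.ncard ≤ q)
    (hq_max : ∃ v : V, {i : Fin s | v ∈ (Gi i).verts}.ncard = q) :
    ((∑ i, vsNum ρ (Gi i).coe : ℝ) / q ≤ (vsNum ρ G : ℝ) ∧
        (s : ℝ) / q ≤ (∑ i, vsNum ρ (Gi i).coe : ℝ) / q) ∧
      (∑ i, vsNum ρ (Gi i).coe : ℝ) - a * ((q : ℝ) - 1) ≤ (vsNum ρ G : ℝ) := by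
  classical
  have hq0 : (0 : ℝ) < q := by exact_mod_cast hq1
  -- extract an optimal set S for G
  obtain ⟨S, hScard, hSprop⟩ :
      ∃ S : Finset V, S.card = vsNum ρ G ∧
        (ρ _ (G.induce (↑Sᶜ : Set V)) ≠ ρ _ G ∨
          (G.induce (↑Sᶜ : Set V)).edgeSet = ∅) := by
    rw [vsNum]
    exact Nat.sInf_mem (aux_vsNum_set_nonempty ρ G)
  -- the induced trace of S on each subgraph
  set T : ∀ i : Fin s, Finset ↥(Gi i).verts :=
    fun i => S.subtype (fun v => v ∈ (Gi i).verts) with hT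
  -- embedding of (Gi i).coe − T i into G − S
  have hemb : ∀ i, IsSubgraphOf ((Gi i).coe.induce (↑(T i)ᶜ : Set ↥(Gi i).verts))
      (G.induce (↑Sᶜ : Set V)) := by
    intro i
    refine ⟨⟨fun x => ⟨x.1.1, ?_⟩, ?_⟩, ?_⟩
    · have hx := x.2
      simp only [Finset.coe_compl, Set.mem_compl_iff, Finset.mem_coe,
        Finset.mem_subtype, hT] at hx ⊢
      exact hx
    · intro a b hab
      apply Subtype.ext
      apply Subtype.ext
      simpa using congrArg Subtype.val hab
    · intro u v h
      exact (Gi i).adj_sub h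
  -- key bound : vsNum of each subgraph is at most the trace cardinality
  have key : ∀ i, vsNum ρ (Gi i).coe ≤ (S.filter (fun v => v ∈ (Gi i).verts)).card := by
    intro i
    rw [vsNum]
    refine Nat.sInf_le ⟨T i, ?_, ?_⟩
    · rw [hT]; exact Finset.card_subtype _ _
    · rcases hSprop with hprop | hprop
      · -- ρ (G − S) ≠ ρ G
        rcases hmono with hm | hm
        · have h1 : ρ _ (G.induce (↑Sᶜ : Set V)) ≤ ρ _ G :=
            hm _ _ _ _ (aux_isSubgraphOf_induce G _)
          have h2 : ρ _ ((Gi i).coe.induce (↑(T i)ᶜ : Set ↥(Gi i).verts)) ≤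
              ρ _ (G.induce (↑Sᶜ : Set V)) := hm _ _ _ _ (hemb i)
          left
          rw [hρ i, ← hk]
          exact ne_of_lt (lt_of_le_of_lt h2 (lt_of_le_of_ne h1 hprop))
        · have h1 : ρ _ G ≤ ρ _ (G.induce (↑Sᶜ : Set V)) :=
            hm _ _ _ _ (aux_isSubgraphOf_induce G _)
          have h2 : ρ _ (G.induce (↑Sᶜ : Set V)) ≤
              ρ _ ((Gi i).coe.induce (↑(T i)ᶜ : Set ↥(Gi i).verts)) := hm _ _ _ _ (hemb i)
          left
          rw [hρ i, ← hk]
          exact (ne_of_lt (lt_of_lt_of_le (lt_of_le_of_ne h1 (Ne.symm hprop)) h2)).symm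
      · exact Or.inr (aux_edgeSet_empty_of_subgraphOf (hemb i) hprop)
  -- multiplicity function
  set m : V → ℕ := fun v => (Finset.univ.filter (fun i : Fin s => v ∈ (Gi i).verts)).card
    with hm_def
  have hmq : ∀ v, m v ≤ q := by
    intro v
    have h := hq_ub v
    have : {i : Fin s | v ∈ (Gi i).verts} =
        ↑(Finset.univ.filter (fun i : Fin s => v ∈ (Gi i).verts)) := by
      ext i; simp
    rwa [this, Set.ncard_coe_finset] at h
  -- double counting
  have hsum1 : ∑ i, (S.filter (fun v => v ∈ (Gi i).verts)).card = ∑ v ∈ S, m v := by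
    simp only [hm_def, Finset.card_filter]
    exact Finset.sum_comm
  have hsum_le : ∑ i, vsNum ρ (Gi i).coe ≤ ∑ v ∈ S, m v := by
    rw [← hsum1]
    exact Finset.sum_le_sum fun i _ => key i
  -- bound 1 : q per vertex
  have hbound1 : ∑ v ∈ S, m v ≤ S.card * q := by
    have := Finset.sum_le_card_nsmul S m q (fun v _ => hmq v)
    simpa [smul_eq_mul] using this
  -- a as a finset cardinality
  have ha' : a = (Finset.univ.filter (fun v : V => 1 < m v)).card := by
    rw [ha]
    have hset : {v : V | ∃ i j : Fin s, i ≠ j ∧ v ∈ (Gi i).verts ∧ v ∈ (Gi j).verts} =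
        ↑(Finset.univ.filter (fun v : V => 1 < m v)) := by
      ext v
      simp only [Set.mem_setOf_eq, Finset.coe_filter, Finset.mem_univ, true_and,
        Set.mem_setOf_eq, hm_def]
      constructor
      · rintro ⟨i, j, hij, hi, hj⟩
        exact Finset.one_lt_card.mpr ⟨i, by simp [hi], j, by simp [hj], hij⟩
      · intro h
        obtain ⟨i, hi, j, hj, hij⟩ := Finset.one_lt_card.mp h
        simp only [Finset.mem_filter, Finset.mem_univ, true_and] at hi hj
        exact ⟨i, j, hij, hi, hj⟩
    rw [hset, Set.ncard_coe_finset]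
  -- bound 2 : at most 1 + (q-1)·[multiple]
  have hbound2 : ∑ v ∈ S, m v ≤ S.card + a * (q - 1) := by
    have hpt : ∀ v ∈ S, m v ≤ 1 + (if 1 < m v then q - 1 else 0) := by
      intro v _
      by_cases h : 1 < m v
      · simp only [h, if_true]
        have := hmq v
        omega
      · simp only [h, if_false]
        omega
    calc ∑ v ∈ S, m v ≤ ∑ v ∈ S, (1 + (if 1 < m v then q - 1 else 0)) :=
          Finset.sum_le_sum hpt
      _ = S.card + ∑ v ∈ S, (if 1 < m v then q - 1 else 0) := by
          rw [Finset.sum_add_distrib, Finset.sum_const, smul_eq_mul, mul_one]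
      _ = S.card + (S.filter (fun v => 1 < m v)).card * (q - 1) := by
          rw [← Finset.sum_filter, Finset.sum_const, smul_eq_mul]
      _ ≤ S.card + a * (q - 1) := by
          have hsub : S.filter (fun v => 1 < m v) ⊆
              Finset.univ.filter (fun v : V => 1 < m v) :=
            Finset.filter_subset_filter _ (Finset.subset_univ S)
          have := Finset.card_le_card hsub
          rw [ha']
          exact Nat.add_le_add_left (Nat.mul_le_mul_right _ this) _
  -- first inequality
  have hineq1 : (∑ i, vsNum ρ (Gi i).coe : ℝ) / q ≤ (vsNum ρ G : ℝ) := by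
    rw [div_le_iff₀ hq0]
    have hN : ∑ i, vsNum ρ (Gi i).coe ≤ vsNum ρ G * q := by
      rw [← hScard]
      exact le_trans hsum_le hbound1
    exact_mod_cast hN
  -- each vsNum (Gi i) ≥ 1
  have hone : ∀ i, 1 ≤ vsNum ρ (Gi i).coe := by
    intro i
    apply aux_one_le_vsNum ρ hmono
    intro hempty
    apply hGine i
    rw [Set.eq_empty_iff_forall_notMem] at hempty ⊢
    intro e he
    induction e using Sym2.ind with
    | _ u v =>
      rw [SimpleGraph.Subgraph.mem_edgeSet] at he
      have hu : u ∈ (Gi i).verts := (Gi i).edge_vert he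
      have hv : v ∈ (Gi i).verts := (Gi i).edge_vert he.symm
      exact hempty s(⟨u, hu⟩, ⟨v, hv⟩) (((Gi i).coe.mem_edgeSet).mpr (by simpa using he))
  -- second inequality
  have hineq2 : (s : ℝ) / q ≤ (∑ i, vsNum ρ (Gi i).coe : ℝ) / q := by
    have hN : s ≤ ∑ i, vsNum ρ (Gi i).coe := by
      calc s = ∑ _i : Fin s, 1 := by simp
        _ ≤ ∑ i, vsNum ρ (Gi i).coe := Finset.sum_le_sum fun i _ => hone i
    gcongr
    exact_mod_cast hN
  -- third inequality
  have hineq3 : (∑ i, vsNum ρ (Gi i).coe : ℝ) - a * ((q : ℝ) - 1) ≤ (vsNum ρ G : ℝ) := by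
    rw [sub_le_iff_le_add]
    have hN : ∑ i, vsNum ρ (Gi i).coe ≤ vsNum ρ G + a * (q - 1) := by
      rw [← hScard]
      exact le_trans hsum_le hbound2
    have := (Nat.cast_le (α := ℝ)).mpr hN
    push_cast [Nat.cast_sub hq1] at this
    linarith
  exact ⟨⟨hineq1, hineq2⟩, hineq3⟩
end

section
/- Let ρ be a monotone graph invariant (either H ⊆ G always implies ρ(H) ≤ ρ(G), or H ⊆ G always implies ρ(H) ≥ ρ(G)). If H is a subgraph of G and ρ(H) = ρ(G), then vs_ρ(H) ≤ vs_ρ(G). -/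
open SimpleGraph

open scoped Classical ENNReal

/-- if `ρ` is monotone, `H ⊆ G` and `ρ H = ρ G`, then `vs_ρ(H) ≤ vs_ρ(G)`. -/
theorem vs_mono_of_subgraph
    (ρ : ∀ (W : Type) [Fintype W] [DecidableEq W], SimpleGraph W → ℝ≥0∞)
    (hmono : MonotoneIncrInv ρ ∨ MonotoneDecrInv ρ)
    {α β : Type} [Fintype α] [DecidableEq α] [Fintype β] [DecidableEq β]
    (H : SimpleGraph α) (G : SimpleGraph β)
    (hsub : IsSubgraphOf H G) (heq : ρ _ H = ρ _ G) :
    vsNum ρ H ≤ vsNum ρ G := by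
  obtain ⟨f, hf⟩ := hsub
  set PG := {n | ∃ S : Finset β, S.card = n ∧
    (ρ _ (G.induce (↑Sᶜ : Set β)) ≠ ρ _ G ∨ (G.induce (↑Sᶜ : Set β)).edgeSet = ∅)} with hPG
  have hne : PG.Nonempty := by
    refine ⟨(Finset.univ : Finset β).card, Finset.univ, rfl, Or.inr ?_⟩
    have hempty : IsEmpty ↥((↑(Finset.univ : Finset β)ᶜ : Set β)) := by
      constructor; rintro ⟨x, hx⟩; simp at hx
    rw [SimpleGraph.edgeSet_eq_empty]
    ext u v
    exact hempty.elim u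
  have hmem : vsNum ρ G ∈ PG := Nat.sInf_mem hne
  obtain ⟨S, hScard, hS⟩ := hmem
  set T : Finset α := Finset.univ.filter (fun a => f a ∈ S) with hTdef
  have hT : ∀ a : α, a ∈ T ↔ f a ∈ S := by intro a; simp [hTdef]
  have hTcard : T.card ≤ S.card := by
    refine Finset.card_le_card_of_injOn f (fun a ha => (hT a).1 ha) ?_
    exact fun a _ b _ h => f.injective h
  -- embedding between induced graphs
  have hmap : ∀ a : ↥(↑Tᶜ : Set α), f a.1 ∈ (↑Sᶜ : Set β) := by
    rintro ⟨a, ha⟩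
    simp only [Finset.coe_compl, Set.mem_compl_iff, Finset.mem_coe] at ha ⊢
    exact fun h => ha ((hT a).2 h)
  let g : ↥(↑Tᶜ : Set α) ↪ ↥(↑Sᶜ : Set β) :=
    ⟨fun a => ⟨f a.1, hmap a⟩, by
      rintro ⟨a, ha⟩ ⟨b, hb⟩ h
      simpa using f.injective (congrArg Subtype.val h)⟩
  have hsub' : IsSubgraphOf (H.induce (↑Tᶜ : Set α)) (G.induce (↑Sᶜ : Set β)) := by
    refine ⟨g, ?_⟩
    rintro ⟨u, hu⟩ ⟨v, hv⟩ h
    exact hf u v h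
  have hsubG : IsSubgraphOf (G.induce (↑Sᶜ : Set β)) G := by
    exact ⟨Function.Embedding.subtype _, fun u v h => h⟩
  have hsubH : IsSubgraphOf (H.induce (↑Tᶜ : Set α)) H := by
    exact ⟨Function.Embedding.subtype _, fun u v h => h⟩
  have hTmem : T.card ∈ {n | ∃ S : Finset α, S.card = n ∧
      (ρ _ (H.induce (↑Sᶜ : Set α)) ≠ ρ _ H ∨ (H.induce (↑Sᶜ : Set α)).edgeSet = ∅)} := by
    refine ⟨T, rfl, ?_⟩
    rcases hS with hSne | hSemp
    · left
      rcases hmono with hincr | hdecr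
      · have h1 : ρ _ (H.induce (↑Tᶜ : Set α)) ≤ ρ _ (G.induce (↑Sᶜ : Set β)) :=
          hincr _ _ _ _ hsub'
        have h2 : ρ _ (G.induce (↑Sᶜ : Set β)) < ρ _ G :=
          lt_of_le_of_ne (hincr _ _ _ _ hsubG) hSne
        rw [← heq] at h2
        exact ne_of_lt (lt_of_le_of_lt h1 h2)
      · have h2 : ρ _ G < ρ _ (G.induce (↑Sᶜ : Set β)) :=
          lt_of_le_of_ne (hdecr _ _ _ _ hsubG) (Ne.symm hSne)
        have h3 : ρ _ (G.induce (↑Sᶜ : Set β)) ≤ ρ _ (H.induce (↑Tᶜ : Set α)) :=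
          hdecr _ _ _ _ hsub'
        rw [← heq] at h2
        exact (ne_of_lt (lt_of_lt_of_le h2 h3)).symm
    · right
      rw [SimpleGraph.edgeSet_eq_empty] at hSemp ⊢
      obtain ⟨g', hg'⟩ := hsub'
      ext u v
      simp only [SimpleGraph.bot_adj, iff_false]
      intro h
      have := hg' u v h
      rw [hSemp] at this
      exact this
  calc vsNum ρ H ≤ T.card := Nat.sInf_le hTmem
    _ ≤ S.card := hTcard
    _ = vsNum ρ G := hScard
end

section
/- If G is a class 1 graph (χ'(G) = Δ(G)) and there exists a vertex set V′ with |V′| = vs_Δ(G), Δ(G−V′) < Δ(G), and G−V′ is a class 1 graph, then vs_{χ'}(G) = vs_Δ(G). -/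
open SimpleGraph

open scoped Classical ENNReal

lemma chromIndex_mem {V : Type} [Fintype V] (G : SimpleGraph V) :
    ∃ c : G.edgeSet → Fin (chromIndex G), ∀ e₁ e₂ : G.edgeSet, e₁ ≠ e₂ →
      (∃ v, v ∈ (e₁ : Sym2 V) ∧ v ∈ (e₂ : Sym2 V)) → c e₁ ≠ c e₂ := by
  have hne : {k | ∃ c : G.edgeSet → Fin k, ∀ e₁ e₂ : G.edgeSet, e₁ ≠ e₂ →
      (∃ v, v ∈ (e₁ : Sym2 V) ∧ v ∈ (e₂ : Sym2 V)) → c e₁ ≠ c e₂}.Nonempty := by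
    refine ⟨Nat.card G.edgeSet, (Finite.equivFin G.edgeSet).toFun, ?_⟩
    intro e₁ e₂ h12 _ hc
    exact h12 ((Finite.equivFin G.edgeSet).injective hc)
  exact Nat.sInf_mem hne

lemma le_chromIndex_of_coloring {V : Type} [Fintype V] (G : SimpleGraph V) {k : ℕ}
    (h : ∃ c : G.edgeSet → Fin k, ∀ e₁ e₂ : G.edgeSet, e₁ ≠ e₂ →
      (∃ v, v ∈ (e₁ : Sym2 V) ∧ v ∈ (e₂ : Sym2 V)) → c e₁ ≠ c e₂) :
    chromIndex G ≤ k :=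
  Nat.sInf_le h

lemma maxDeg_le_chromIndex {V : Type} [Fintype V] (G : SimpleGraph V) :
    maxDeg G ≤ chromIndex G := by
  obtain ⟨c, hc⟩ := chromIndex_mem G
  refine Finset.sup_le fun v _ => ?_
  have hinj : Function.Injective (fun w : G.neighborSet v =>
      c ⟨s(v, (w : V)), (SimpleGraph.mem_edgeSet G).2 w.2⟩) := by
    intro w₁ w₂ h
    by_contra hne
    have hval : (w₁ : V) ≠ w₂ := fun h' => hne (Subtype.ext h')
    refine hc _ _ ?_ ⟨v, by simp, by simp⟩ h
    intro hEq
    have : s(v, (w₁ : V)) = s(v, (w₂ : V)) := congrArg Subtype.val hEq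
    exact hval (Sym2.congr_right.1 this)
  calc (G.neighborSet v).ncard = Nat.card (G.neighborSet v) :=
        (Nat.card_coe_set_eq _).symm
    _ ≤ Nat.card (Fin (chromIndex G)) := Nat.card_le_card_of_injective _ hinj
    _ = chromIndex G := by simp

lemma chromIndex_induce_le {V : Type} [Fintype V] (G : SimpleGraph V) (s : Set V) :
    chromIndex (G.induce s) ≤ chromIndex G := by
  obtain ⟨c, hc⟩ := chromIndex_mem G
  apply le_chromIndex_of_coloring
  refine ⟨fun e => c ((SimpleGraph.Embedding.induce s).mapEdgeSet e), ?_⟩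
  rintro e₁ e₂ hne ⟨v, hv1, hv2⟩
  refine hc _ _ (fun h => hne ((SimpleGraph.Embedding.induce s).mapEdgeSet.injective h)) ?_
  exact ⟨(v : V), Sym2.mem_map.2 ⟨v, hv1, rfl⟩, Sym2.mem_map.2 ⟨v, hv2, rfl⟩⟩

/-- if `G` is class 1 and there is a vertex set `V'` with `|V'| = vs_Δ(G)`,
`Δ(G - V') < Δ(G)`, and `G - V'` of class 1, then `vs_{χ'}(G) = vs_Δ(G)`. -/
theorem vsChi_eq_vsDelta_of_class_one {V : Type} [Fintype V] [DecidableEq V]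
    (G : SimpleGraph V) (h1 : chromIndex G = maxDeg G)
    (V' : Finset V) (hcard : V'.card = vsDelta G)
    (hlt : maxDeg (G.induce (↑V'ᶜ : Set V)) < maxDeg G)
    (hcl1 : chromIndex (G.induce (↑V'ᶜ : Set V)) = maxDeg (G.induce (↑V'ᶜ : Set V))) :
    vsChi G = vsDelta G := by
  -- G has at least one edge, since maxDeg G > 0
  have hEd : G.edgeSet ≠ ∅ := by
    intro h
    rw [SimpleGraph.edgeSet_eq_empty] at h
    subst h
    have : maxDeg (⊥ : SimpleGraph V) = 0 := by
      apply Nat.le_antisymm _ (Nat.zero_le _)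
      refine Finset.sup_le fun v _ => ?_
      simp [SimpleGraph.neighborSet]
    omega
  set A : Set ℕ := {n | ∃ S : Finset V, S.card = n ∧
      chromIndex (G.induce (↑Sᶜ : Set V)) ≠ chromIndex G} with hA
  have hvsChi : vsChi G = sInf A := by rw [vsChi, if_neg hEd]
  have hmem : vsDelta G ∈ A := by
    refine ⟨V', hcard, ?_⟩
    rw [h1, hcl1]
    exact Nat.ne_of_lt hlt
  obtain ⟨S, hS, hSne⟩ : ∃ S : Finset V, S.card = sInf A ∧
      chromIndex (G.induce (↑Sᶜ : Set V)) ≠ chromIndex G :=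
    Nat.sInf_mem ⟨vsDelta G, hmem⟩
  have hle : vsDelta G ≤ sInf A := by
    apply Nat.sInf_le
    refine ⟨S, hS, Or.inl ?_⟩
    intro hmd
    apply hSne
    refine le_antisymm (chromIndex_induce_le G _) ?_
    calc chromIndex G = maxDeg G := h1
      _ = maxDeg (G.induce (↑Sᶜ : Set V)) := hmd.symm
      _ ≤ chromIndex (G.induce (↑Sᶜ : Set V)) := maxDeg_le_chromIndex _
  have hge : sInf A ≤ vsDelta G := Nat.sInf_le hmem
  omega
end

section
/- If G is a bipartite graph, then vs_{χ'}(G) = vs_Δ(G). -/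
open SimpleGraph

open scoped Classical ENNReal

/-- A proper partial edge coloring viewed as a total function. -/
def ProperOn {V : Type} {k : ℕ} (G : SimpleGraph V) (f : Sym2 V → Fin k) : Prop :=
  ∀ e₁ ∈ G.edgeSet, ∀ e₂ ∈ G.edgeSet, e₁ ≠ e₂ → (∃ v, v ∈ e₁ ∧ v ∈ e₂) → f e₁ ≠ f e₂

lemma exists_missing {V : Type} [Fintype V] {k : ℕ} {G' : SimpleGraph V} {f : Sym2 V → Fin k}
    (hf : ProperOn G' f) (w : V) (hdeg : (G'.neighborSet w).ncard < k) :
    ∃ γ : Fin k, ∀ z, G'.Adj w z → f s(w, z) ≠ γ := by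
  by_contra h
  push_neg at h
  have hsurj : Function.Surjective (fun z : G'.neighborSet w => f s(w, z.1)) := by
    intro γ
    obtain ⟨z, hz, hfz⟩ := h γ
    exact ⟨⟨z, hz⟩, hfz⟩
  have hle := Fintype.card_le_of_surjective _ hsurj
  rw [Fintype.card_fin] at hle
  have hcard : Fintype.card (G'.neighborSet w) = (G'.neighborSet w).ncard := by
    rw [Set.ncard_eq_toFinset_card', Set.toFinset_card]
  omega

lemma extend_proper {V : Type} {k : ℕ} {G : SimpleGraph V} {u v : V} (huv : G.Adj u v)
    {f : Sym2 V → Fin k} (hf : ProperOn (G.deleteEdges {s(u, v)}) f) (β : Fin k)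
    (hu : ∀ z, (G.deleteEdges {s(u, v)}).Adj u z → f s(u, z) ≠ β)
    (hv : ∀ z, (G.deleteEdges {s(u, v)}).Adj v z → f s(v, z) ≠ β) :
    ProperOn G (fun e => if e = s(u, v) then β else f e) := by
  have hmem : ∀ e ∈ G.edgeSet, e ≠ s(u, v) → e ∈ (G.deleteEdges {s(u, v)}).edgeSet := by
    intro e he hne
    rw [edgeSet_deleteEdges]
    exact ⟨he, hne⟩
  have hside : ∀ e ∈ G.edgeSet, e ≠ s(u, v) → (∃ z, z ∈ e ∧ z ∈ s(u, v)) → f e ≠ β := by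
    intro e he hne ⟨z, hz1, hz2⟩
    have he' := hmem e he hne
    rcases Sym2.mem_iff.mp hz2 with rfl | rfl
    · obtain ⟨w', rfl⟩ := Sym2.mem_iff_exists.mp hz1
      exact hu w' (by rwa [mem_edgeSet] at he')
    · obtain ⟨w', rfl⟩ := Sym2.mem_iff_exists.mp hz1
      exact hv w' (by rwa [mem_edgeSet] at he')
  intro e₁ he₁ e₂ he₂ hne hsh
  dsimp only
  by_cases h1 : e₁ = s(u, v) <;> by_cases h2 : e₂ = s(u, v)
  · exact absurd (h1.trans h2.symm) hne
  · rw [if_pos h1, if_neg h2]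
    obtain ⟨z, hz1, hz2⟩ := hsh
    exact fun hc => hside e₂ he₂ h2 ⟨z, hz2, h1 ▸ hz1⟩ hc.symm
  · rw [if_neg h1, if_pos h2]
    obtain ⟨z, hz1, hz2⟩ := hsh
    exact hside e₁ he₁ h1 ⟨z, hz1, h2 ▸ hz2⟩
  · rw [if_neg h1, if_neg h2]
    exact hf e₁ (hmem e₁ he₁ h1) e₂ (hmem e₂ he₂ h2) hne hsh

lemma koenig {V : Type} [Fintype V] [DecidableEq V] (col : V → Fin 2) {k : ℕ} (hk : 0 < k) :
    ∀ (n : ℕ) (G : SimpleGraph V), G.edgeSet.ncard ≤ n →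
      (∀ a b, G.Adj a b → col a ≠ col b) →
      (∀ w, (G.neighborSet w).ncard ≤ k) →
      ∃ f : Sym2 V → Fin k, ProperOn G f := by
  intro n
  induction n with
  | zero =>
    intro G hcard hcol hdeg
    have hE : G.edgeSet = ∅ := by
      rw [← Set.ncard_eq_zero (Set.toFinite _)]; omega
    exact ⟨fun _ => ⟨0, hk⟩, fun e₁ he₁ => absurd he₁ (by simp [hE])⟩
  | succ n ih =>
    intro G hcard hcol hdeg
    by_cases hE : G.edgeSet = ∅
    · exact ⟨fun _ => ⟨0, hk⟩, fun e₁ he₁ => absurd he₁ (by simp [hE])⟩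
    · obtain ⟨e0, he0⟩ := Set.nonempty_iff_ne_empty.mpr hE
      obtain ⟨u, v, he0⟩ := Sym2.exists.mp ⟨e0, he0⟩
      have huv : G.Adj u v := G.mem_edgeSet.mp he0
      set G' := G.deleteEdges {s(u, v)} with hG'
      have hG'le : ∀ a b, G'.Adj a b → G.Adj a b := fun a b h => h.1
      -- edge count decreases
      have hE' : G'.edgeSet = G.edgeSet \ {s(u, v)} := edgeSet_deleteEdges _
      have hcard' : G'.edgeSet.ncard ≤ n := by
        rw [hE', Set.ncard_diff_singleton_of_mem he0]
        omega
      -- neighbor sets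
      have hnbsub : ∀ w, G'.neighborSet w ⊆ G.neighborSet w := by
        intro w z hz; exact hG'le w z hz
      have hdeg' : ∀ w, (G'.neighborSet w).ncard ≤ k := fun w =>
        le_trans (Set.ncard_le_ncard (hnbsub w) (Set.toFinite _)) (hdeg w)
      obtain ⟨f, hf⟩ := ih G' hcard' (fun a b h => hcol a b (hG'le a b h)) hdeg'
      -- strict degree bounds at u and v
      have hdu : (G'.neighborSet u).ncard < k := by
        have hss : G'.neighborSet u ⊂ G.neighborSet u := by
          refine ⟨hnbsub u, fun hsub => ?_⟩
          have : G'.Adj u v := hsub huv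
          simp [hG', deleteEdges_adj] at this
        exact lt_of_lt_of_le (Set.ncard_lt_ncard hss (Set.toFinite _)) (hdeg u)
      have hdv : (G'.neighborSet v).ncard < k := by
        have hss : G'.neighborSet v ⊂ G.neighborSet v := by
          refine ⟨hnbsub v, fun hsub => ?_⟩
          have : G'.Adj v u := hsub huv.symm
          simp [hG', deleteEdges_adj, Sym2.eq_swap] at this
        exact lt_of_lt_of_le (Set.ncard_lt_ncard hss (Set.toFinite _)) (hdeg v)
      obtain ⟨α, hα⟩ := exists_missing hf u hdu
      obtain ⟨β, hβ⟩ := exists_missing hf v hdv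
      by_cases hab : α = β
      · subst hab
        exact ⟨_, extend_proper huv hf α hα hβ⟩
      · -- the alternating α/β subgraph
        set H : SimpleGraph V :=
          { Adj := fun a b => G'.Adj a b ∧ (f s(a, b) = α ∨ f s(a, b) = β)
            symm := ⟨fun a b hadj =>
              ⟨hadj.1.symm, by rw [Sym2.eq_swap]; exact hadj.2⟩⟩
            loopless := ⟨fun a hadj => G'.loopless.irrefl a hadj.1⟩ } with hH
        have hHG' : ∀ a b, H.Adj a b → G'.Adj a b := fun _ _ h => h.1
        have hHset : ∀ e, e ∈ H.edgeSet ↔ e ∈ G'.edgeSet ∧ (f e = α ∨ f e = β) := by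
          intro e
          induction e using Sym2.ind with
          | _ a b => rw [mem_edgeSet, mem_edgeSet]
        -- parity of walks in H wrt the 2-coloring
        have parity : ∀ {a b : V} (q : H.Walk a b), Even q.length ↔ col a = col b := by
          intro a b q
          induction q with
          | nil => simp
          | @cons a w b hadj q ihq =>
            have hne : col a ≠ col w := hcol a w (hG'le a w (hHG' a w hadj))
            rw [Walk.length_cons, Nat.even_add_one, ihq]
            have hfin : ∀ x y z : Fin 2, x ≠ y → (¬(y = z) ↔ x = z) := by decide
            exact hfin _ _ _ hne
        -- alternation along paths ending at v
        have alt : ∀ {w b : V} (q : H.Walk w b), (∀ z, G'.Adj b z → f s(b, z) ≠ β) →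
            ∀ (prev : V) (hadj : H.Adj prev w),
            (Walk.cons hadj q).IsPath → (Even q.length ↔ f s(prev, w) = α) := by
          intro w b q
          induction q with
          | @nil b =>
            intro hmiss prev hadj _
            simp only [Walk.length_nil, Even.zero, true_iff]
            have h1 : f s(prev, b) ≠ β := by
              have := hmiss prev (hHG' b prev hadj.symm)
              rwa [Sym2.eq_swap] at this
            rcases hadj.2 with h | h
            · exact h
            · exact absurd h h1
          | @cons w w' b' hadj' q' ihq =>
            intro hmiss prev hadj hp
            rw [Walk.cons_isPath_iff] at hp
            have hih := ihq hmiss w hadj' hp.1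
            have hpw' : prev ≠ w' := by
              intro he
              apply hp.2
              rw [he, Walk.support_cons]
              exact List.mem_cons_of_mem _ (Walk.start_mem_support q')
            have hedne : s(prev, w) ≠ s(w, w') := by
              intro he
              rw [Sym2.eq_iff] at he
              rcases he with ⟨h1, _⟩ | ⟨h1, _⟩
              · exact hadj.1.ne h1
              · exact hpw' h1
            have hm1 : s(prev, w) ∈ G'.edgeSet := G'.mem_edgeSet.mpr hadj.1
            have hm2 : s(w, w') ∈ G'.edgeSet := G'.mem_edgeSet.mpr hadj'.1
            have hfne : f s(prev, w) ≠ f s(w, w') :=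
              hf _ hm1 _ hm2 hedne ⟨w, by simp, by simp⟩
            rw [Walk.length_cons, Nat.even_add_one, hih]
            rcases hadj.2 with h1 | h1 <;> rcases hadj'.2 with h2 | h2 <;> rw [h1, h2] at hfne ⊢
            · exact absurd rfl hfne
            · simp [Ne.symm hab]
            · simp [Ne.symm hab]
            · exact absurd rfl hfne
        -- v is not reachable from u in H
        have hnr : ¬ H.Reachable u v := by
          intro hr
          obtain ⟨w0⟩ := hr
          obtain ⟨pw, hpw⟩ := w0.toPath
          cases pw with
          | nil => exact G.loopless.irrefl u huv
          | @cons _ w _ hadj q =>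
            have h1 := alt q (fun z hz => hβ z hz) u hadj hpw
            have h2 : f s(u, w) ≠ α := hα w (hHG' u w hadj)
            have h3 : ¬ Even q.length := fun he => h2 (h1.mp he)
            have h4 := parity (Walk.cons hadj q)
            rw [Walk.length_cons, Nat.even_add_one] at h4
            exact hcol u v huv (h4.mp h3)
        -- propagate reachability along an H-edge
        have hprop : ∀ e ∈ H.edgeSet, ∀ z ∈ e, H.Reachable u z → ∀ z' ∈ e, H.Reachable u z' := by
          intro e he z hz hrz z' hz'
          induction e using Sym2.ind with
          | _ a b =>
            have hadj : H.Adj a b := H.mem_edgeSet.mp he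
            rcases Sym2.mem_iff.mp hz with rfl | rfl <;> rcases Sym2.mem_iff.mp hz' with rfl | rfl
            · exact hrz
            · exact hrz.trans hadj.reachable
            · exact hrz.trans hadj.symm.reachable
            · exact hrz
        set Sw : Sym2 V → Prop := fun e => e ∈ H.edgeSet ∧ ∀ z ∈ e, H.Reachable u z with hSw
        set g : Sym2 V → Fin k := fun e => if Sw e then (if f e = α then β else α) else f e with hg
        have hgH : ∀ e, Sw e → g e = α ∨ g e = β := by
          intro e hs
          rw [hg]
          dsimp only
          rw [if_pos hs]
          rcases ((hHset e).mp hs.1).2 with h | h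
          · rw [if_pos h]; exact Or.inr rfl
          · rw [if_neg (show f e ≠ α by rw [h]; exact Ne.symm hab)]
            exact Or.inl rfl
        have hgne : ∀ e, ¬ Sw e → g e = f e := by
          intro e hs
          rw [hg]
          dsimp only
          rw [if_neg hs]
        -- g is proper on G'
        have hgproper : ProperOn G' g := by
          intro e₁ he₁ e₂ he₂ hne hsh
          obtain ⟨z, hz1, hz2⟩ := hsh
          have horig := hf e₁ he₁ e₂ he₂ hne ⟨z, hz1, hz2⟩
          have hkey : ∀ eA ∈ G'.edgeSet, ∀ eB ∈ G'.edgeSet, Sw eA → ¬ Sw eB →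
              ∀ zz, zz ∈ eA → zz ∈ eB → ¬ (f eB = α ∨ f eB = β) := by
            intro eA _ eB heB hsA hsB zz hzA hzB hcB
            apply hsB
            have heBH : eB ∈ H.edgeSet := (hHset eB).mpr ⟨heB, hcB⟩
            exact ⟨heBH, fun z' hz' => hprop eB heBH zz hzB (hsA.2 zz hzA) z' hz'⟩
          by_cases s1 : Sw e₁ <;> by_cases s2 : Sw e₂
          · have hc1 := ((hHset e₁).mp s1.1).2
            have hc2 := ((hHset e₂).mp s2.1).2
            rw [hg]
            dsimp only
            rw [if_pos s1, if_pos s2]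
            rcases hc1 with h1 | h1 <;> rcases hc2 with h2 | h2 <;> rw [h1, h2] at horig ⊢
            · exact absurd rfl horig
            · rw [if_pos rfl, if_neg (Ne.symm hab)]
              exact Ne.symm hab
            · rw [if_neg (Ne.symm hab), if_pos rfl]
              exact hab
            · exact absurd rfl horig
          · have hc2 := hkey e₁ he₁ e₂ he₂ s1 s2 z hz1 hz2
            rw [hgne e₂ s2]
            rcases hgH e₁ s1 with h | h <;> rw [h] <;> intro hc
            · exact hc2 (Or.inl hc.symm)
            · exact hc2 (Or.inr hc.symm)
          · have hc1 := hkey e₂ he₂ e₁ he₁ s2 s1 z hz2 hz1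
            rw [hgne e₁ s1]
            rcases hgH e₂ s2 with h | h <;> rw [h] <;> intro hc
            · exact hc1 (Or.inl hc)
            · exact hc1 (Or.inr hc)
          · rw [hgne e₁ s1, hgne e₂ s2]
            exact horig
        -- after the swap, β is missing at u
        have hu' : ∀ z, G'.Adj u z → g s(u, z) ≠ β := by
          intro z hz
          by_cases hc : f s(u, z) = α ∨ f s(u, z) = β
          · have hH1 : s(u, z) ∈ H.edgeSet := (hHset _).mpr ⟨G'.mem_edgeSet.mpr hz, hc⟩
            have hsw : Sw s(u, z) :=
              ⟨hH1, fun z' hz' => hprop _ hH1 u (by simp) (Reachable.refl u) z' hz'⟩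
            have hfz : f s(u, z) = β := by
              rcases hc with h | h
              · exact absurd h (hα z hz)
              · exact h
            rw [hg]
            dsimp only
            rw [if_pos hsw, if_neg (show f s(u, z) ≠ α by rw [hfz]; exact Ne.symm hab)]
            exact hab
          · have hns : ¬ Sw s(u, z) := fun hs => hc (((hHset _).mp hs.1).2)
            rw [hgne _ hns]
            exact fun h => hc (Or.inr h)
        -- β is still missing at v
        have hv' : ∀ z, G'.Adj v z → g s(v, z) ≠ β := by
          intro z hz
          have hns : ¬ Sw s(v, z) := fun hs => hnr (hs.2 v (by simp))
          rw [hgne _ hns]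
          exact hβ z hz
        exact ⟨_, extend_proper huv hgproper β hu' hv'⟩

lemma chromIndex_le_of_proper {V : Type} {G : SimpleGraph V} {k : ℕ}
    (f : Sym2 V → Fin k) (hf : ProperOn G f) : chromIndex G ≤ k := by
  apply Nat.sInf_le
  refine ⟨fun e => f e.1, fun e₁ e₂ hne hsh => ?_⟩
  exact hf e₁.1 e₁.2 e₂.1 e₂.2 (fun h => hne (Subtype.ext h)) hsh

lemma chromIndex_of_empty {V : Type} {G : SimpleGraph V} (h : G.edgeSet = ∅) :
    chromIndex G = 0 := by
  refine Nat.le_zero.mp (Nat.sInf_le ?_)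
  exact ⟨fun e => absurd e.2 (Set.eq_empty_iff_forall_notMem.mp h _),
    fun e₁ _ _ _ => absurd e₁.2 (Set.eq_empty_iff_forall_notMem.mp h _)⟩

lemma maxDeg'_le_chromIndex {V : Type} [Fintype V] (G : SimpleGraph V) :
    (Finset.univ.sup fun v => (G.neighborSet v).ncard) ≤ chromIndex G := by
  classical
  have hfin : G.edgeSet.Finite := Set.toFinite _
  have hmem : Fintype.card G.edgeSet ∈ {k | ∃ c : G.edgeSet → Fin k,
      ∀ e₁ e₂ : G.edgeSet, e₁ ≠ e₂ →
        (∃ v, v ∈ (e₁ : Sym2 V) ∧ v ∈ (e₂ : Sym2 V)) → c e₁ ≠ c e₂} := by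
    refine ⟨fun e => Fintype.equivFin _ e, fun e₁ e₂ hne _ h => ?_⟩
    exact hne ((Fintype.equivFin _).injective h)
  have hinf := Nat.sInf_mem (Set.nonempty_of_mem hmem)
  obtain ⟨c, hc⟩ := hinf
  apply Finset.sup_le
  intro v _
  have hmemedge : ∀ w : G.neighborSet v, s(v, w.1) ∈ G.edgeSet :=
    fun w => G.mem_edgeSet.mpr w.2
  have hinj : Function.Injective
      (fun w : G.neighborSet v => c ⟨s(v, w.1), hmemedge w⟩) := by
    intro w₁ w₂ h
    by_contra hne
    have hne2 : w₁.1 ≠ w₂.1 := fun hh => hne (Subtype.ext hh)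
    have hne' : (⟨s(v, w₁.1), hmemedge w₁⟩ : G.edgeSet) ≠ ⟨s(v, w₂.1), hmemedge w₂⟩ := by
      intro heq
      have := congrArg Subtype.val heq
      simp only [Sym2.congr_right] at this
      exact hne2 this
    exact hc _ _ hne' ⟨v, by simp, by simp⟩ h
  have := Fintype.card_le_of_injective _ hinj
  rw [Fintype.card_fin] at this
  rwa [Set.ncard_eq_toFinset_card', Set.toFinset_card]

lemma chromIndex_eq_maxDeg {V : Type} [Fintype V] [DecidableEq V] (G : SimpleGraph V)
    (h2 : G.Colorable 2) :
    chromIndex G = maxDeg G := by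
  show chromIndex G = Finset.univ.sup fun v => (G.neighborSet v).ncard
  rcases eq_or_ne G.edgeSet ∅ with hE | hE
  · rw [chromIndex_of_empty hE]
    symm
    have hnb : ∀ v, G.neighborSet v = ∅ := by
      intro v
      rw [Set.eq_empty_iff_forall_notMem]
      intro w hw
      exact absurd (G.mem_edgeSet.mpr hw) (by rw [hE]; exact Set.notMem_empty _)
    apply Nat.le_zero.mp
    apply Finset.sup_le
    intro v _
    rw [hnb v]
    simp
  · -- nonempty edge set
    obtain ⟨e0, he0⟩ := Set.nonempty_iff_ne_empty.mpr hE
    obtain ⟨a, b, hab⟩ := Sym2.exists.mp ⟨e0, he0⟩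
    have hadj : G.Adj a b := G.mem_edgeSet.mp hab
    have hpos : 0 < Finset.univ.sup fun v => (G.neighborSet v).ncard := by
      have h1 : 0 < (G.neighborSet a).ncard := by
        rw [Set.ncard_pos (Set.toFinite _)]
        exact ⟨b, hadj⟩
      exact lt_of_lt_of_le h1 (Finset.le_sup (f := fun v => (G.neighborSet v).ncard) (Finset.mem_univ a))
    obtain ⟨C⟩ := h2
    obtain ⟨f, hf⟩ := koenig (fun v => C v) hpos (G.edgeSet.ncard) G le_rfl
      (fun x y hxy => C.valid hxy)
      (fun w => Finset.le_sup (f := fun v => (G.neighborSet v).ncard) (Finset.mem_univ w))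
    exact le_antisymm (chromIndex_le_of_proper f hf) (maxDeg'_le_chromIndex G)

lemma chromIndex_le_auxmax {V : Type} [Fintype V] [DecidableEq V] (G : SimpleGraph V)
    (h2 : G.Colorable 2) : chromIndex G = maxDeg G :=
  chromIndex_eq_maxDeg G h2

lemma induce_colorable_two {V : Type} {G : SimpleGraph V} (h2 : G.Colorable 2) (s : Set V) :
    (G.induce s).Colorable 2 := by
  obtain ⟨C⟩ := h2
  exact ⟨SimpleGraph.Coloring.mk (fun x => C x.1) (fun hxy => C.valid hxy)⟩

lemma induce_edgeSet_empty {V : Type} {G : SimpleGraph V} (h : G.edgeSet = ∅) (s : Set V) :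
    (G.induce s).edgeSet = ∅ := by
  rw [Set.eq_empty_iff_forall_notMem]
  intro e
  induction e using Sym2.ind with
  | _ a b =>
    intro he
    have hadj : G.Adj a.1 b.1 := (G.induce s).mem_edgeSet.mp he
    exact Set.eq_empty_iff_forall_notMem.mp h _ (G.mem_edgeSet.mpr hadj)

lemma maxDeg_pos_of_edge {V : Type} [Fintype V] {G : SimpleGraph V}
    (hE : G.edgeSet ≠ ∅) : 0 < maxDeg G := by
  show 0 < Finset.univ.sup fun v => (G.neighborSet v).ncard
  obtain ⟨e0, he0⟩ := Set.nonempty_iff_ne_empty.mpr hE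
  obtain ⟨a, b, hab⟩ := Sym2.exists.mp ⟨e0, he0⟩
  have hadj : G.Adj a b := G.mem_edgeSet.mp hab
  have h1 : 0 < (G.neighborSet a).ncard := by
    rw [Set.ncard_pos (Set.toFinite _)]
    exact ⟨b, hadj⟩
  exact lt_of_lt_of_le h1
    (Finset.le_sup (f := fun v => (G.neighborSet v).ncard) (Finset.mem_univ a))

/-- if `G` is bipartite, then `vs_{χ'}(G) = vs_Δ(G)`. -/
theorem vsChi_eq_vsDelta_of_bipartite {V : Type} [Fintype V] [DecidableEq V]
    (G : SimpleGraph V) (hbip : G.Colorable 2) :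
    vsChi G = vsDelta G := by
  rcases eq_or_ne G.edgeSet ∅ with hE | hE
  · rw [vsChi, if_pos hE, vsDelta]
    symm
    apply Nat.sInf_eq_zero.mpr
    left
    exact ⟨∅, Finset.card_empty, Or.inr (induce_edgeSet_empty hE _)⟩
  · rw [vsChi, if_neg hE, vsDelta]
    have key : ∀ S : Finset V,
        chromIndex (G.induce (↑Sᶜ : Set V)) ≠ chromIndex G ↔
          (maxDeg (G.induce (↑Sᶜ : Set V)) ≠ maxDeg G ∨
            (G.induce (↑Sᶜ : Set V)).edgeSet = ∅) := by
      intro S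
      have h1 : chromIndex G = maxDeg G := chromIndex_eq_maxDeg G hbip
      have h2 : chromIndex (G.induce (↑Sᶜ : Set V)) = maxDeg (G.induce (↑Sᶜ : Set V)) :=
        chromIndex_eq_maxDeg _ (induce_colorable_two hbip _)
      constructor
      · intro h
        left
        rw [← h1, ← h2]
        exact h
      · rintro (h | h)
        · rw [h1, h2]
          exact h
        · rw [h1, chromIndex_of_empty h]
          intro hc
          exact (maxDeg_pos_of_edge hE).ne' hc.symm
          
    congr 1
    ext n
    simp only [Set.mem_setOf_eq]
    constructor
    · rintro ⟨S, hcard, hS⟩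
      exact ⟨S, hcard, (key S).mp hS⟩
    · rintro ⟨S, hcard, hS⟩
      exact ⟨S, hcard, (key S).mpr hS⟩
end

section
/- For the path graph P_n on n ≥ 3 vertices, vs_{χ'}(P_n) = vs_Δ(P_n) = ⌈(n−2)/3⌉. -/
open SimpleGraph

open scoped Classical ENNReal

section Aux

variable {V : Type} (G : SimpleGraph V) (ℓ : V → ℕ)

def IsPathLabel : Prop :=
  Function.Injective ℓ ∧ ∀ u v, G.Adj u v → ℓ u + 1 = ℓ v ∨ ℓ v + 1 = ℓ u

lemma exists_two_coloring (h : IsPathLabel G ℓ) :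
    ∃ c : G.edgeSet → Fin 2, ∀ e₁ e₂ : G.edgeSet, e₁ ≠ e₂ →
      (∃ v, v ∈ (e₁ : Sym2 V) ∧ v ∈ (e₂ : Sym2 V)) → c e₁ ≠ c e₂ := by
  refine ⟨fun e => ⟨(Sym2.lift ⟨fun a b => min (ℓ a) (ℓ b),
      fun a b => min_comm _ _⟩ (e : Sym2 V)) % 2, Nat.mod_lt _ (by norm_num)⟩, ?_⟩
  rintro e₁ e₂ hne ⟨v, hv1, hv2⟩
  obtain ⟨u₁, h1⟩ := Sym2.mem_iff_exists.mp hv1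
  obtain ⟨u₂, h2⟩ := Sym2.mem_iff_exists.mp hv2
  have ha1 : G.Adj v u₁ := by
    have := e₁.2; rw [h1] at this; exact this
  have ha2 : G.Adj v u₂ := by
    have := e₂.2; rw [h2] at this; exact this
  have hu : u₁ ≠ u₂ := by
    intro heq
    exact hne (Subtype.ext (by rw [h1, h2, heq]))
  have hl : ℓ u₁ ≠ ℓ u₂ := fun hh => hu (h.1 hh)
  have d1 := h.2 v u₁ ha1
  have d2 := h.2 v u₂ ha2
  intro hcc
  have hv' := congrArg Fin.val hcc
  simp only [h1, h2, Sym2.lift_mk] at hv'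
  omega

lemma chromIndex_le_two (h : IsPathLabel G ℓ) : chromIndex G ≤ 2 :=
  Nat.sInf_le (exists_two_coloring G ℓ h)

lemma chromIndex_eq_two (h : IsPathLabel G ℓ) (e₁ e₂ : G.edgeSet) (hne : e₁ ≠ e₂)
    (v : V) (hv1 : v ∈ (e₁ : Sym2 V)) (hv2 : v ∈ (e₂ : Sym2 V)) : chromIndex G = 2 := by
  refine le_antisymm (chromIndex_le_two G ℓ h) ?_
  by_contra hlt
  push_neg at hlt
  have hmem := Nat.sInf_mem (⟨2, exists_two_coloring G ℓ h⟩ :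
    Set.Nonempty {k | ∃ c : G.edgeSet → Fin k, ∀ e₁ e₂ : G.edgeSet, e₁ ≠ e₂ →
      (∃ v, v ∈ (e₁ : Sym2 V) ∧ v ∈ (e₂ : Sym2 V)) → c e₁ ≠ c e₂})
  obtain ⟨c, hc⟩ := hmem
  have hle : chromIndex G ≤ 1 := Nat.lt_succ_iff.mp hlt
  have h1 : ((c e₁) : ℕ) = 0 := Nat.lt_one_iff.mp (lt_of_lt_of_le (c e₁).isLt hle)
  have h2 : ((c e₂) : ℕ) = 0 := Nat.lt_one_iff.mp (lt_of_lt_of_le (c e₂).isLt hle)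
  exact hc e₁ e₂ hne ⟨v, hv1, hv2⟩ (Fin.ext (h1.trans h2.symm))

lemma chromIndex_le_one (h : ∀ e₁ e₂ : G.edgeSet,
    (∃ v, v ∈ (e₁ : Sym2 V) ∧ v ∈ (e₂ : Sym2 V)) → e₁ = e₂) : chromIndex G ≤ 1 :=
  Nat.sInf_le ⟨fun _ => 0, fun e₁ e₂ hne hsh => absurd (h e₁ e₂ hsh) hne⟩

lemma maxDeg_le_two [Fintype V] (h : IsPathLabel G ℓ) : maxDeg G ≤ 2 := by
  apply Finset.sup_le
  intro v _
  by_contra hlt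
  push_neg at hlt
  obtain ⟨a, ha, b, hb, c, hc, hab, hac, hbc⟩ := (Set.two_lt_ncard (Set.toFinite _)).mp hlt
  rw [SimpleGraph.mem_neighborSet] at ha hb hc
  have d1 := h.2 v a ha
  have d2 := h.2 v b hb
  have d3 := h.2 v c hc
  have l1 : ℓ a ≠ ℓ b := fun hh => hab (h.1 hh)
  have l2 : ℓ a ≠ ℓ c := fun hh => hac (h.1 hh)
  have l3 : ℓ b ≠ ℓ c := fun hh => hbc (h.1 hh)
  omega

lemma two_le_maxDeg [Fintype V] (v a b : V) (hab : a ≠ b)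
    (ha : G.Adj v a) (hb : G.Adj v b) : 2 ≤ maxDeg G := by
  have h1 : 1 < (G.neighborSet v).ncard :=
    (Set.one_lt_ncard (Set.toFinite _)).mpr ⟨a, ha, b, hb, hab⟩
  unfold maxDeg
  exact le_trans h1 (Finset.le_sup (f := fun u => (G.neighborSet u).ncard) (Finset.mem_univ v))

lemma maxDeg_le_one [Fintype V] (h : ∀ v a b : V, G.Adj v a → G.Adj v b → a = b) :
    maxDeg G ≤ 1 := by
  apply Finset.sup_le
  intro v _
  by_contra hlt
  push_neg at hlt
  obtain ⟨a, ha, b, hb, hab⟩ := (Set.one_lt_ncard (Set.toFinite _)).mp hlt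
  rw [SimpleGraph.mem_neighborSet] at ha hb
  exact hab (h v a b ha hb)

end Aux

section PathSpecific

/-- There exist three consecutive surviving vertices (a surviving middle vertex). -/
def midFree (n : ℕ) (S : Finset (Fin n)) : Prop :=
  ∃ i j k : Fin n, i ∉ S ∧ j ∉ S ∧ k ∉ S ∧ (j : ℕ) + 1 = (i : ℕ) ∧ (i : ℕ) + 1 = (k : ℕ)

variable {n : ℕ} {S : Finset (Fin n)}

lemma mem_comp {x : Fin n} (hx : x ∉ S) : x ∈ ((↑Sᶜ : Set (Fin n))) := by simp [hx]

lemma pathLabel_induce (s : Set (Fin n)) :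
    IsPathLabel ((pathGraph n).induce s) (fun v => ((v : Fin n) : ℕ)) := by
  constructor
  · intro u v h
    exact Subtype.ext (Fin.ext h)
  · intro u v h
    have h' : (pathGraph n).Adj ↑u ↑v := h
    exact pathGraph_adj.mp h'

lemma midFree_stuff (h : midFree n S) :
    chromIndex ((pathGraph n).induce (↑Sᶜ : Set (Fin n))) = 2 ∧
    maxDeg ((pathGraph n).induce (↑Sᶜ : Set (Fin n))) = 2 ∧
    ((pathGraph n).induce (↑Sᶜ : Set (Fin n))).edgeSet ≠ ∅ := by
  obtain ⟨i, j, k, hi, hj, hk, hji, hik⟩ := h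
  have hpl := pathLabel_induce (n := n) (↑Sᶜ : Set (Fin n))
  set H := (pathGraph n).induce (↑Sᶜ : Set (Fin n)) with hH
  let vi : ↥(↑Sᶜ : Set (Fin n)) := ⟨i, mem_comp hi⟩
  let vj : ↥(↑Sᶜ : Set (Fin n)) := ⟨j, mem_comp hj⟩
  let vk : ↥(↑Sᶜ : Set (Fin n)) := ⟨k, mem_comp hk⟩
  have aji : H.Adj vj vi := by
    show (pathGraph n).Adj j i
    exact pathGraph_adj.mpr (Or.inl hji)
  have aik : H.Adj vi vk := by
    show (pathGraph n).Adj i k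
    exact pathGraph_adj.mpr (Or.inl hik)
  let e₁ : H.edgeSet := ⟨s(vj, vi), aji⟩
  let e₂ : H.edgeSet := ⟨s(vi, vk), aik⟩
  have hji' : vj ≠ vi := by
    intro hq
    have := congrArg (fun x : ↥(↑Sᶜ : Set (Fin n)) => ((x : Fin n) : ℕ)) hq
    simp only [vi, vj] at this
    omega
  have hjk' : vj ≠ vk := by
    intro hq
    have := congrArg (fun x : ↥(↑Sᶜ : Set (Fin n)) => ((x : Fin n) : ℕ)) hq
    simp only [vj, vk] at this
    omega
  have hne : e₁ ≠ e₂ := by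
    intro hq
    have hq' : s(vj, vi) = s(vi, vk) := congrArg Subtype.val hq
    have hm : vj ∈ s(vi, vk) := hq' ▸ Sym2.mem_mk_left vj vi
    rcases Sym2.mem_iff.mp hm with h' | h'
    · exact hji' h'
    · exact hjk' h'
  have hv1 : vi ∈ (e₁ : Sym2 _) := Sym2.mem_mk_right vj vi
  have hv2 : vi ∈ (e₂ : Sym2 _) := Sym2.mem_mk_left vi vk
  refine ⟨chromIndex_eq_two H _ hpl e₁ e₂ hne vi hv1 hv2, ?_, ?_⟩
  · refine le_antisymm (maxDeg_le_two H _ hpl) ?_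
    exact two_le_maxDeg H vi vj vk hjk' aji.symm aik
  · intro hq
    have he : s(vj, vi) ∈ H.edgeSet := aji
    rw [hq] at he
    exact Set.notMem_empty _ he

lemma not_midFree_unique (h : ¬ midFree n S) :
    ∀ v a b : ↥(↑Sᶜ : Set (Fin n)),
      ((pathGraph n).induce (↑Sᶜ : Set (Fin n))).Adj v a →
      ((pathGraph n).induce (↑Sᶜ : Set (Fin n))).Adj v b → a = b := by
  intro v a b hva hvb
  by_contra hab
  have h1 : (pathGraph n).Adj ↑v ↑a := hva
  have h2 : (pathGraph n).Adj ↑v ↑b := hvb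
  rw [pathGraph_adj] at h1 h2
  have hval : ((a : Fin n) : ℕ) ≠ ((b : Fin n) : ℕ) := by
    intro hq
    exact hab (Subtype.ext (Fin.ext hq))
  have ma : (a : Fin n) ∉ S := by have := a.2; simpa using this
  have mb : (b : Fin n) ∉ S := by have := b.2; simpa using this
  have mv : (v : Fin n) ∉ S := by have := v.2; simpa using this
  apply h
  rcases h1 with h1 | h1 <;> rcases h2 with h2 | h2
  · exact absurd (show ((a : Fin n) : ℕ) = ((b : Fin n) : ℕ) by omega) hval
  · exact ⟨v, b, a, mv, mb, ma, h2, h1⟩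
  · exact ⟨v, a, b, mv, ma, mb, h1, h2⟩
  · exact absurd (show ((a : Fin n) : ℕ) = ((b : Fin n) : ℕ) by omega) hval

lemma not_midFree_chromIndex (h : ¬ midFree n S) :
    chromIndex ((pathGraph n).induce (↑Sᶜ : Set (Fin n))) ≤ 1 := by
  apply chromIndex_le_one
  rintro e₁ e₂ ⟨v, hv1, hv2⟩
  obtain ⟨a, h1⟩ := Sym2.mem_iff_exists.mp hv1
  obtain ⟨b, h2⟩ := Sym2.mem_iff_exists.mp hv2
  have ha : ((pathGraph n).induce (↑Sᶜ : Set (Fin n))).Adj v a := by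
    have := e₁.2; rw [h1] at this; exact this
  have hb : ((pathGraph n).induce (↑Sᶜ : Set (Fin n))).Adj v b := by
    have := e₂.2; rw [h2] at this; exact this
  have hab := not_midFree_unique h v a b ha hb
  exact Subtype.ext (by rw [h1, h2, hab])

lemma not_midFree_maxDeg (h : ¬ midFree n S) :
    maxDeg ((pathGraph n).induce (↑Sᶜ : Set (Fin n))) ≤ 1 :=
  maxDeg_le_one _ (not_midFree_unique h)

lemma pathLabel_path : IsPathLabel (pathGraph n) Fin.val :=
  ⟨fun _ _ h => Fin.ext h, fun _ _ h => pathGraph_adj.mp h⟩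

lemma edgeSet_path_ne (hn : 3 ≤ n) : (pathGraph n).edgeSet ≠ ∅ := by
  intro hq
  have h01 : (pathGraph n).Adj ⟨0, by omega⟩ ⟨1, by omega⟩ := pathGraph_adj.mpr (Or.inl rfl)
  have : s((⟨0, by omega⟩ : Fin n), (⟨1, by omega⟩ : Fin n)) ∈ (pathGraph n).edgeSet := h01
  rw [hq] at this
  exact Set.notMem_empty _ this

lemma chromIndex_path (hn : 3 ≤ n) : chromIndex (pathGraph n) = 2 := by
  have h01 : (pathGraph n).Adj ⟨0, by omega⟩ ⟨1, by omega⟩ := pathGraph_adj.mpr (Or.inl rfl)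
  have h12 : (pathGraph n).Adj ⟨1, by omega⟩ ⟨2, by omega⟩ := pathGraph_adj.mpr (Or.inl rfl)
  let e₁ : (pathGraph n).edgeSet := ⟨s(⟨0, by omega⟩, ⟨1, by omega⟩), h01⟩
  let e₂ : (pathGraph n).edgeSet := ⟨s(⟨1, by omega⟩, ⟨2, by omega⟩), h12⟩
  have hne : e₁ ≠ e₂ := by
    intro hq
    have hq' : s((⟨0, by omega⟩ : Fin n), ⟨1, by omega⟩) = s((⟨1, by omega⟩ : Fin n), ⟨2, by omega⟩) :=
      congrArg Subtype.val hq
    have hm : (⟨0, by omega⟩ : Fin n) ∈ s((⟨1, by omega⟩ : Fin n), (⟨2, by omega⟩ : Fin n)) :=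
      hq' ▸ Sym2.mem_mk_left _ _
    rcases Sym2.mem_iff.mp hm with h' | h' <;>
      · have := congrArg Fin.val h'
        simp only [] at this
        omega
  refine chromIndex_eq_two _ Fin.val pathLabel_path e₁ e₂ hne ⟨1, by omega⟩
    (Sym2.mem_mk_right _ _) (Sym2.mem_mk_left _ _)

lemma maxDeg_path (hn : 3 ≤ n) : maxDeg (pathGraph n) = 2 := by
  refine le_antisymm (maxDeg_le_two _ Fin.val pathLabel_path) ?_
  have h10 : (pathGraph n).Adj ⟨1, by omega⟩ ⟨0, by omega⟩ := pathGraph_adj.mpr (Or.inr rfl)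
  have h12 : (pathGraph n).Adj ⟨1, by omega⟩ ⟨2, by omega⟩ := pathGraph_adj.mpr (Or.inl rfl)
  refine two_le_maxDeg _ ⟨1, by omega⟩ ⟨0, by omega⟩ ⟨2, by omega⟩ ?_ h10 h12
  intro hq
  have := congrArg Fin.val hq
  simp only [] at this
  omega

end PathSpecific

section Comb

variable {n : ℕ}

lemma sInf_midFree (hn : 3 ≤ n) :
    sInf {m | ∃ S : Finset (Fin n), S.card = m ∧ ¬ midFree n S} = n / 3 := by
  classical
  have hinj : Function.Injective
      (fun p : Fin (n / 3) => (⟨3 * (p : ℕ) + 2, by have := p.isLt; omega⟩ : Fin n)) := by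
    intro p q hpq
    have h := congrArg Fin.val hpq
    simp only [] at h
    exact Fin.ext (by omega)
  set S₀ : Finset (Fin n) := Finset.image
    (fun p : Fin (n / 3) => (⟨3 * (p : ℕ) + 2, by have := p.isLt; omega⟩ : Fin n))
    Finset.univ with hS₀
  have hmem : ∀ x : Fin n, (x : ℕ) % 3 = 2 → x ∈ S₀ := by
    intro x hx
    rw [hS₀, Finset.mem_image]
    refine ⟨⟨(x : ℕ) / 3, by have := x.isLt; omega⟩, Finset.mem_univ _, ?_⟩
    apply Fin.ext
    show 3 * ((x : ℕ) / 3) + 2 = (x : ℕ)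
    omega
  have hcard : S₀.card = n / 3 := by
    rw [hS₀, Finset.card_image_of_injective _ hinj, Finset.card_univ, Fintype.card_fin]
  have hnmf : ¬ midFree n S₀ := by
    rintro ⟨i, j, k, hi, hj, hk, hji, hik⟩
    have h3 : (i : ℕ) % 3 = 2 ∨ (j : ℕ) % 3 = 2 ∨ (k : ℕ) % 3 = 2 := by omega
    rcases h3 with h' | h' | h'
    · exact hi (hmem i h')
    · exact hj (hmem j h')
    · exact hk (hmem k h')
  have hub : n / 3 ∈ {m | ∃ S : Finset (Fin n), S.card = m ∧ ¬ midFree n S} := ⟨S₀, hcard, hnmf⟩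
  have hlb : ∀ m ∈ {m | ∃ S : Finset (Fin n), S.card = m ∧ ¬ midFree n S}, n / 3 ≤ m := by
    rintro m ⟨S, hcard', hS⟩
    have hex : ∀ p : Fin (n / 3),
        ∃ x, x ∈ S ∧ 3 * (p : ℕ) ≤ (x : ℕ) ∧ (x : ℕ) ≤ 3 * (p : ℕ) + 2 := by
      intro p
      have hp : 3 * (p : ℕ) + 2 < n := by have := p.isLt; omega
      by_contra hno
      apply hS
      refine ⟨⟨3 * (p : ℕ) + 1, by omega⟩, ⟨3 * (p : ℕ), by omega⟩, ⟨3 * (p : ℕ) + 2, by omega⟩,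
        ?_, ?_, ?_, rfl, rfl⟩
      · intro hmem'
        exact hno ⟨_, hmem', by show 3 * (p : ℕ) ≤ 3 * (p : ℕ) + 1; omega,
          by show 3 * (p : ℕ) + 1 ≤ 3 * (p : ℕ) + 2; omega⟩
      · intro hmem'
        exact hno ⟨_, hmem', by show 3 * (p : ℕ) ≤ 3 * (p : ℕ); omega,
          by show 3 * (p : ℕ) ≤ 3 * (p : ℕ) + 2; omega⟩
      · intro hmem'
        exact hno ⟨_, hmem', by show 3 * (p : ℕ) ≤ 3 * (p : ℕ) + 2; omega,
          by show 3 * (p : ℕ) + 2 ≤ 3 * (p : ℕ) + 2; omega⟩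
    choose f hfS hf1 hf2 using hex
    have hcalc : (Finset.univ : Finset (Fin (n / 3))).card ≤ S.card := by
      refine Finset.card_le_card_of_injOn f (fun p _ => hfS p) ?_
      intro p _ q _ hpq
      have h1 := hf1 p
      have h2 := hf2 p
      have h3 := hf1 q
      have h4 := hf2 q
      rw [hpq] at h1 h2
      exact Fin.ext (by omega)
    rw [Finset.card_univ, Fintype.card_fin, hcard'] at hcalc
    exact hcalc
  exact le_antisymm (Nat.sInf_le hub) (hlb _ (Nat.sInf_mem ⟨_, hub⟩))

end Comb

/-- for `n ≥ 3`, `vs_{χ'}(P_n) = vs_Δ(P_n) = ⌈(n-2)/3⌉`. -/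
theorem vs_pathGraph (n : ℕ) (hn : 3 ≤ n) :
    vsChi (pathGraph n) = vsDelta (pathGraph n) ∧
      vsChi (pathGraph n) = ((n - 2) + 2) / 3 := by
  have hE := edgeSet_path_ne hn
  have hkeyC : ∀ S : Finset (Fin n),
      (chromIndex ((pathGraph n).induce (↑Sᶜ : Set (Fin n))) ≠ chromIndex (pathGraph n)) ↔
        ¬ midFree n S := by
    intro S
    rw [chromIndex_path hn]
    constructor
    · intro hne hm
      exact hne (midFree_stuff hm).1
    · intro hm
      have := not_midFree_chromIndex hm
      omega
  have hkeyD : ∀ S : Finset (Fin n),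
      (maxDeg ((pathGraph n).induce (↑Sᶜ : Set (Fin n))) ≠ maxDeg (pathGraph n) ∨
        ((pathGraph n).induce (↑Sᶜ : Set (Fin n))).edgeSet = ∅) ↔ ¬ midFree n S := by
    intro S
    rw [maxDeg_path hn]
    constructor
    · rintro (hne | he) hm
      · exact hne (midFree_stuff hm).2.1
      · exact (midFree_stuff hm).2.2 he
    · intro hm
      left
      have := not_midFree_maxDeg hm
      omega
  have hchi : vsChi (pathGraph n) =
      sInf {m | ∃ S : Finset (Fin n), S.card = m ∧ ¬ midFree n S} := by
    unfold vsChi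
    rw [if_neg hE]
    congr 1
    ext m
    simp only [Set.mem_setOf_eq]
    constructor
    · rintro ⟨S, h1, h2⟩
      exact ⟨S, h1, (hkeyC S).mp h2⟩
    · rintro ⟨S, h1, h2⟩
      exact ⟨S, h1, (hkeyC S).mpr h2⟩
  have hdel : vsDelta (pathGraph n) =
      sInf {m | ∃ S : Finset (Fin n), S.card = m ∧ ¬ midFree n S} := by
    unfold vsDelta
    congr 1
    ext m
    simp only [Set.mem_setOf_eq]
    constructor
    · rintro ⟨S, h1, h2⟩
      exact ⟨S, h1, (hkeyD S).mp h2⟩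
    · rintro ⟨S, h1, h2⟩
      exact ⟨S, h1, (hkeyD S).mpr h2⟩
  have hinf := sInf_midFree (n := n) hn
  refine ⟨hchi.trans hdel.symm, ?_⟩
  rw [hchi, hinf]
  omega
end
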